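/- Let m ≥ 1 and consider the symmetric control system ẋ_t = σ(x_t)a_t on ℝ^{m+1}, where σ(x) = [I_m, 0_m ; 0, x_hᵀ] is the Grushin matrix and the controls take values in the closed unit ball of ℝ^{2m}. Then the minimum time function T to reach the origin is finite on {x : x_h ≠ 0}, satisfies T(x₀) ≤ U(x₀)²/|x_{0,h}| there with U(x) = (|x_h|⁴+4x_v²)^{1/4}, and is locally Lipschitz continuous on the open set {x = (x_h,x_v) ∈ ℝ^{m+1} : x_h ≠ 0}. -/

import Mathlib

open Set MeasureTheory
open scoped RealInnerProductSpace

/-- An admissible trajectory of the Grushin symmetric control system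
`ẋ = σ(x)a = (a₁, ⟪x_h, a₂⟫)`, with controls `a = (a₁,a₂)` in the closed unit
ball of `ℝ^{2m}`. -/
def IsGrushinTraj {m : ℕ} (x₀ : EuclideanSpace ℝ (Fin m) × ℝ)
    (x : ℝ → EuclideanSpace ℝ (Fin m) × ℝ) : Prop :=
  x 0 = x₀ ∧ ContinuousOn x (Ici (0:ℝ)) ∧
    ∃ a : ℝ → EuclideanSpace ℝ (Fin m) × EuclideanSpace ℝ (Fin m),
      Measurable a ∧ (∀ t, ‖(a t).1‖ ^ 2 + ‖(a t).2‖ ^ 2 ≤ 1) ∧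
      ∀ t : ℝ, 0 ≤ t →
        x t = x₀ + ∫ s in (0:ℝ)..t,
          (((a s).1, ⟪(x s).1, (a s).2⟫) : EuclideanSpace ℝ (Fin m) × ℝ)

/-- The set of times at which the origin is reached from `x₀`. -/
def grushinReachTimes {m : ℕ} (x₀ : EuclideanSpace ℝ (Fin m) × ℝ) : Set ℝ :=
  {t | 0 ≤ t ∧ ∃ x : ℝ → EuclideanSpace ℝ (Fin m) × ℝ, IsGrushinTraj x₀ x ∧ x t = 0}

/-! From a point with `x_h ≠ 0`, one constant control drives both `x_h` and `x_v` to zero at the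
same time `U(x)² / ‖x_h‖`. Between two points `y`, `z` with `z_h ≠ 0` one steers horizontally
(at unit speed) and then vertically (at speed `‖z_h‖`), in time at most
`(1 + 1/‖z_h‖) |y - z|`; following this by a fast path from `z` gives
`T(y) ≤ T(z) + (1 + 1/‖z_h‖) |y - z|`, a local Lipschitz bound since `‖z_h‖` stays away from
zero near a point with `x_h ≠ 0`. -/

lemma eqOn_ite_le_sub_Ici {X : Type*} {f g : ℝ → X} {T : ℝ} (hfg : g 0 = f T) :
    EqOn (fun t => if t ≤ T then f t else g (t - T)) (fun t => g (t - T)) (Ici T) := by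
  intro t ht
  rcases (show T ≤ t from ht).eq_or_lt with rfl | hlt
  · simp [hfg]
  · simp [not_le.2 hlt]

lemma ContinuousOn.append {X : Type*} [TopologicalSpace X] {f g : ℝ → X} {T : ℝ}
    (hf : ContinuousOn f (Ici 0)) (hg : ContinuousOn g (Ici 0)) (hfg : g 0 = f T) :
    ContinuousOn (fun t => if t ≤ T then f t else g (t - T)) (Ici 0) := by
  have h_left : ContinuousOn (fun t => if t ≤ T then f t else g (t - T)) (Icc 0 T) :=
    (hf.mono Icc_subset_Ici_self).congr fun t ht => if_pos ht.2
  have h_right : ContinuousOn (fun t => if t ≤ T then f t else g (t - T)) (Ici T) :=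
    (hg.comp (by fun_prop) fun t ht => mem_Ici.2 (sub_nonneg.2 ht)).congr (eqOn_ite_le_sub_Ici hfg)
  refine (h_left.union_of_isClosed h_right isClosed_Icc isClosed_Ici).mono fun t ht => ?_
  exact (le_total t T).elim (fun hle => Or.inl ⟨ht, hle⟩) Or.inr

namespace Grushin

variable {m : ℕ}

local notation "E" => EuclideanSpace ℝ (Fin m)

/-- The Grushin vector field `σ(p) c`. -/
noncomputable def field (p : E × ℝ) (c : E × E) : E × ℝ := (c.1, ⟪p.1, c.2⟫)

lemma continuous_field : Continuous fun q : (E × ℝ) × (E × E) => field q.1 q.2 := by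
  unfold field; fun_prop

lemma norm_field_le (p : E × ℝ) {c : E × E} (hc : ‖c.1‖ ^ 2 + ‖c.2‖ ^ 2 ≤ 1) :
    ‖field p c‖ ≤ 1 + ‖p‖ := by
  have hc₁ : ‖c.1‖ ≤ 1 := by nlinarith [norm_nonneg c.1, sq_nonneg ‖c.2‖]
  have hc₂ : ‖c.2‖ ≤ 1 := by nlinarith [norm_nonneg c.2, sq_nonneg ‖c.1‖]
  have hinner : ‖⟪p.1, c.2⟫‖ ≤ ‖p‖ :=
    calc ‖⟪p.1, c.2⟫‖ ≤ ‖p.1‖ * ‖c.2‖ := norm_inner_le_norm _ _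
      _ ≤ ‖p.1‖ := mul_le_of_le_one_right (norm_nonneg _) hc₂
      _ ≤ ‖p‖ := norm_fst_le p
  rw [field, Prod.norm_def]
  exact max_le (by linarith [norm_nonneg p]) (by linarith)

lemma isGrushinTraj_iff {y : E × ℝ} {x : ℝ → E × ℝ} :
    IsGrushinTraj y x ↔ x 0 = y ∧ ContinuousOn x (Ici 0) ∧
      ∃ a : ℝ → E × E, Measurable a ∧ (∀ t, ‖(a t).1‖ ^ 2 + ‖(a t).2‖ ^ 2 ≤ 1) ∧
        ∀ t, 0 ≤ t → x t = y + ∫ s in (0:ℝ)..t, field (x s) (a s) :=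
  Iff.rfl

lemma intervalIntegrable_field {x : ℝ → E × ℝ} {a : ℝ → E × E} (hx : ContinuousOn x (Ici 0))
    (ha : Measurable a) (ha_le : ∀ t, ‖(a t).1‖ ^ 2 + ‖(a t).2‖ ^ 2 ≤ 1) {b : ℝ} (hb : 0 ≤ b) :
    IntervalIntegrable (fun s => field (x s) (a s)) volume 0 b := by
  have hsub : uIoc 0 b ⊆ Ici 0 := by
    rw [uIoc_of_le hb]; exact fun s hs => hs.1.le
  have hmeas : AEStronglyMeasurable (fun s => field (x s) (a s)) (volume.restrict (uIoc 0 b)) :=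
    continuous_field.comp_aestronglyMeasurable
      (((hx.mono hsub).aestronglyMeasurable measurableSet_uIoc).prodMk ha.aestronglyMeasurable)
  have hbound : IntervalIntegrable (fun s => 1 + ‖x s‖) volume 0 b :=
    ContinuousOn.intervalIntegrable (continuousOn_const.add
      (hx.mono (by rw [uIcc_of_le hb]; exact Icc_subset_Ici_self)).norm)
  exact hbound.mono_fun' hmeas (Filter.Eventually.of_forall fun s => norm_field_le _ (ha_le s))

lemma isGrushinTraj_of_hasDerivAt {y : E × ℝ} {x : ℝ → E × ℝ} {a : ℝ → E × E} (hx₀ : x 0 = y)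
    (ha : Continuous a) (ha_le : ∀ t, ‖(a t).1‖ ^ 2 + ‖(a t).2‖ ^ 2 ≤ 1)
    (hx : ∀ t, HasDerivAt x (field (x t) (a t)) t) : IsGrushinTraj y x := by
  have hxc : Continuous x := continuous_iff_continuousAt.2 fun t => (hx t).continuousAt
  refine isGrushinTraj_iff.2 ⟨hx₀, hxc.continuousOn, a, ha.measurable, ha_le, fun t _ => ?_⟩
  rw [intervalIntegral.integral_eq_sub_of_hasDerivAt (fun s _ => hx s)
    ((continuous_field.comp (hxc.prodMk ha)).intervalIntegrable _ _), hx₀]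
  abel

lemma isGrushinTraj_const (y : E × ℝ) {c : E × E} (hc : ‖c.1‖ ^ 2 + ‖c.2‖ ^ 2 ≤ 1) :
    IsGrushinTraj y fun t => (y.1 + t • c.1, y.2 + t * ⟪y.1, c.2⟫ + t ^ 2 / 2 * ⟪c.1, c.2⟫) := by
  refine isGrushinTraj_of_hasDerivAt (by simp) continuous_const (fun _ => hc) fun t => ?_
  have h₁ : HasDerivAt (fun t : ℝ => y.1 + t • c.1) c.1 t := by
    simpa using ((hasDerivAt_id t).smul_const c.1).const_add y.1
  have h₂ : HasDerivAt (fun t : ℝ => y.2 + t * ⟪y.1, c.2⟫ + t ^ 2 / 2 * ⟪c.1, c.2⟫)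
      (⟪y.1, c.2⟫ + t * ⟪c.1, c.2⟫) t := by
    have := (((hasDerivAt_id t).mul_const ⟪y.1, c.2⟫).const_add y.2).add
      (((hasDerivAt_pow 2 t).div_const 2).mul_const ⟪c.1, c.2⟫)
    exact this.congr_deriv (by simp)
  convert h₁.prodMk h₂ using 1
  simp [field, inner_add_left, real_inner_smul_left]

lemma _root_.IsGrushinTraj.append {y : E × ℝ} {x x' : ℝ → E × ℝ} {T : ℝ} (hT : 0 ≤ T)
    (hx : IsGrushinTraj y x) (hx' : IsGrushinTraj (x T) x') :
    IsGrushinTraj y fun t => if t ≤ T then x t else x' (t - T) := by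
  obtain ⟨hx₀, hxc, a, ha, ha_le, hxa⟩ := isGrushinTraj_iff.1 hx
  obtain ⟨hx'₀, hx'c, a', ha', ha'_le, hx'a⟩ := isGrushinTraj_iff.1 hx'
  set z : ℝ → E × ℝ := fun t => if t ≤ T then x t else x' (t - T)
  set c : ℝ → E × E := fun t => if t ≤ T then a t else a' (t - T)
  have hz_left : EqOn z x (Iic T) := fun t ht => if_pos ht
  have hz_right : EqOn z (fun t => x' (t - T)) (Ici T) := eqOn_ite_le_sub_Ici hx'₀
  have hfield_left : EqOn (fun s => field (z s) (c s)) (fun s => field (x s) (a s)) (Iic T) :=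
    fun s hs => by simp only [hz_left hs, c, if_pos (show s ≤ T from hs)]
  have hfield_right : EqOn (fun s => field (z s) (c s))
      (fun s => field (x' (s - T)) (a' (s - T))) (Ioi T) :=
    fun s hs => by
      simp only [hz_right (show T < s from hs).le, c, if_neg (not_le.2 (show T < s from hs))]
  refine isGrushinTraj_iff.2
    ⟨by simp [z, hT, hx₀], hxc.append hx'c hx'₀, c, ?_, ?_, fun t ht => ?_⟩
  · exact ha.ite measurableSet_Iic (ha'.comp (measurable_id.sub measurable_const))
  · intro t
    by_cases h : t ≤ T <;> simp [c, h, ha_le, ha'_le]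
  by_cases htT : t ≤ T
  · have hsub : uIcc 0 t ⊆ Iic T := by
      rw [uIcc_of_le ht]; exact Icc_subset_Iic_self.trans (Iic_subset_Iic.2 htT)
    rw [hz_left htT, hxa t ht, intervalIntegral.integral_congr (hfield_left.mono hsub)]
  push Not at htT
  have hright_eq : (uIoo T t).EqOn (fun s => field (z s) (c s))
      (fun s => field (x' (s - T)) (a' (s - T))) :=
    hfield_right.mono (by rw [uIoo_of_le htT.le]; exact Ioo_subset_Ioi_self)
  have hleft_eq : (uIcc 0 T).EqOn (fun s => field (z s) (c s)) (fun s => field (x s) (a s)) :=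
    hfield_left.mono (by rw [uIcc_of_le hT]; exact Icc_subset_Iic_self)
  have hshift : IntervalIntegrable (fun s => field (x' (s - T)) (a' (s - T))) volume T t := by
    simpa using (intervalIntegrable_field hx'c ha' ha'_le (sub_nonneg.2 htT.le)).comp_sub_right T
  rw [← intervalIntegral.integral_add_adjacent_intervals
      ((intervalIntegrable_congr (hleft_eq.symm.mono uIoc_subset_uIcc)).1
        (intervalIntegrable_field hxc ha ha_le hT))
      ((intervalIntegrable_congr_uIoo hright_eq).2 hshift),
    intervalIntegral.integral_congr hleft_eq, intervalIntegral.integral_congr_uIoo hright_eq,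
    intervalIntegral.integral_comp_sub_right (fun s => field (x' s) (a' s)), sub_self,
    ← add_assoc, ← hxa T hT, ← hx'a (t - T) (sub_nonneg.2 htT.le)]
  exact hz_right htT.le

def Reachable (y y' : E × ℝ) (T : ℝ) : Prop := 0 ≤ T ∧ ∃ x, IsGrushinTraj y x ∧ x T = y'

lemma Reachable.trans {y y' y'' : E × ℝ} {T T' : ℝ} (h : Reachable y y' T)
    (h' : Reachable y' y'' T') : Reachable y y'' (T + T') := by
  obtain ⟨hT, x, hx, rfl⟩ := h
  obtain ⟨hT', x', hx', rfl⟩ := h'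
  refine ⟨add_nonneg hT hT', _, hx.append hT hx', ?_⟩
  rcases hT'.eq_or_lt with rfl | hpos
  · simp [(isGrushinTraj_iff.1 hx').1]
  · simp [not_le.2 (lt_add_of_pos_right T hpos)]

lemma reachable_const (y : E × ℝ) {c : E × E} (hc : ‖c.1‖ ^ 2 + ‖c.2‖ ^ 2 ≤ 1) {T : ℝ}
    (hT : 0 ≤ T) :
    Reachable y (y.1 + T • c.1, y.2 + T * ⟪y.1, c.2⟫ + T ^ 2 / 2 * ⟪c.1, c.2⟫) T :=
  ⟨hT, _, isGrushinTraj_const y hc, rfl⟩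

lemma reachable_add_horizontal (y : E × ℝ) (h : E) : Reachable y (y.1 + h, y.2) ‖h‖ := by
  rcases eq_or_ne h 0 with rfl | hh
  · simpa using reachable_const y (c := 0) (by simp) le_rfl
  have hc : ‖(‖h‖⁻¹ • h, (0 : E)).1‖ ^ 2 + ‖(‖h‖⁻¹ • h, (0 : E)).2‖ ^ 2 ≤ 1 := by
    simp [norm_smul, hh]
  simpa [smul_inv_smul₀ (norm_ne_zero_iff.2 hh)] using reachable_const y hc (norm_nonneg h)

lemma reachable_add_vertical {y : E × ℝ} (hy : y.1 ≠ 0) (δ : ℝ) :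
    Reachable y (y.1, y.2 + δ) (|δ| / ‖y.1‖) := by
  rcases eq_or_ne δ 0 with rfl | hδ
  · simpa using reachable_const y (c := 0) (by simp) le_rfl
  have hr : ‖y.1‖ ≠ 0 := norm_ne_zero_iff.2 hy
  have hδ' : |δ| ≠ 0 := abs_ne_zero.2 hδ
  set k := δ / (|δ| * ‖y.1‖)
  have hc : ‖((0 : E), k • y.1).1‖ ^ 2 + ‖((0 : E), k • y.1).2‖ ^ 2 ≤ 1 := by
    simp only [norm_zero, norm_smul, Real.norm_eq_abs, k, abs_div, abs_mul, abs_abs, abs_norm]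
    field_simp
    simp
  convert reachable_const y hc (div_nonneg (abs_nonneg δ) (norm_nonneg y.1)) using 2
  · simp
  · simp only [inner_smul_right, real_inner_self_eq_norm_sq, inner_zero_left, k]
    field_simp
    ring

/-- The witness is the constant control `-(‖y_h‖², 2 y_v) / √(‖y_h‖⁴ + 4 y_v²)` times the unit
vector `y_h / ‖y_h‖`: it has norm one, and both components of the state vanish at the same time. -/
lemma reachable_origin {y : E × ℝ} (hy : y.1 ≠ 0) :
    Reachable y 0 (√(‖y.1‖ ^ 4 + 4 * y.2 ^ 2) / ‖y.1‖) := by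
  set r := ‖y.1‖ with hr_def
  have hr : 0 < r := norm_pos_iff.2 hy
  set D := √(r ^ 4 + 4 * y.2 ^ 2)
  have hD : 0 < D := Real.sqrt_pos.2 (by positivity)
  have hD_sq : D ^ 2 = r ^ 4 + 4 * y.2 ^ 2 := Real.sq_sqrt (by positivity)
  set c : E × E := ((-(r / D)) • y.1, (-(2 * y.2 / (D * r))) • y.1)
  have hc : ‖c.1‖ ^ 2 + ‖c.2‖ ^ 2 ≤ 1 := by
    simp only [c, norm_smul, Real.norm_eq_abs, mul_pow, sq_abs, ← hr_def]
    field_simp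
    linarith
  convert reachable_const y hc (div_nonneg hD.le hr.le) using 1
  refine Prod.ext ?_ ?_
  · have hcoef : D / r * -(r / D) = -1 := by field_simp
    simp only [c, smul_smul, Prod.fst_zero, hcoef, neg_one_smul, add_neg_cancel]
  · simp only [c, real_inner_smul_left, real_inner_smul_right, real_inner_self_eq_norm_sq, ← hr_def,
      Prod.snd_zero]
    field_simp
    ring

lemma reachable_of_fst_ne_zero {y y' : E × ℝ} (hy' : y'.1 ≠ 0) :
    Reachable y y' (‖y'.1 - y.1‖ + |y'.2 - y.2| / ‖y'.1‖) := by
  have h₁ : Reachable y (y'.1, y.2) ‖y'.1 - y.1‖ := by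
    simpa using reachable_add_horizontal y (y'.1 - y.1)
  have h₂ : Reachable (y'.1, y.2) y' (|y'.2 - y.2| / ‖y'.1‖) := by
    simpa using reachable_add_vertical (y := (y'.1, y.2)) hy' (y'.2 - y.2)
  exact h₁.trans h₂

lemma sInf_grushinReachTimes_le {y : E × ℝ} {t : ℝ} (h : Reachable y 0 t) :
    sInf (grushinReachTimes y) ≤ t :=
  csInf_le ⟨0, fun _ ht => ht.1⟩ h

lemma sInf_grushinReachTimes_le_add {y y' : E × ℝ} {τ : ℝ} (h : Reachable y y' τ)
    (hne : (grushinReachTimes y').Nonempty) :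
    sInf (grushinReachTimes y) ≤ τ + sInf (grushinReachTimes y') := by
  have hlb : ∀ t ∈ grushinReachTimes y', sInf (grushinReachTimes y) - τ ≤ t := fun t ht =>
    sub_le_iff_le_add'.2 (sInf_grushinReachTimes_le (h.trans ht))
  linarith [le_csInf hne hlb]

lemma sInf_grushinReachTimes_le_add_dist (y : E × ℝ) {z : E × ℝ} (hz : z.1 ≠ 0) :
    sInf (grushinReachTimes y) ≤ sInf (grushinReachTimes z) + (1 + 1 / ‖z.1‖) * dist y z := by
  have hfst : ‖z.1 - y.1‖ ≤ dist y z := by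
    rw [dist_comm, dist_eq_norm]; exact norm_fst_le (z - y)
  have hsnd : |z.2 - y.2| ≤ dist y z := by
    rw [dist_comm, dist_eq_norm, ← Real.norm_eq_abs]; exact norm_snd_le (z - y)
  have hsteer := sInf_grushinReachTimes_le_add (reachable_of_fst_ne_zero (y := y) hz)
    ⟨_, reachable_origin hz⟩
  have hvert : |z.2 - y.2| / ‖z.1‖ ≤ 1 / ‖z.1‖ * dist y z := by
    rw [one_div_mul_eq_div]
    exact div_le_div_of_nonneg_right hsnd (norm_nonneg _)
  linarith

lemma lipschitzOnWith_sInf_grushinReachTimes {x₀ : E × ℝ} (h₀ : x₀.1 ≠ 0) :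
    LipschitzOnWith (1 + 2 / ‖x₀.1‖).toNNReal (fun y => sInf (grushinReachTimes y))
      (Metric.ball x₀ (‖x₀.1‖ / 2)) := by
  have hr : 0 < ‖x₀.1‖ := norm_pos_iff.2 h₀
  refine LipschitzOnWith.of_le_add_mul' _ fun y _ z hz => ?_
  have hz_fst : ‖x₀.1‖ / 2 < ‖z.1‖ := by
    have h₁ : ‖z.1 - x₀.1‖ < ‖x₀.1‖ / 2 :=
      (norm_fst_le (z - x₀)).trans_lt (by rwa [← dist_eq_norm, ← Metric.mem_ball])
    linarith [norm_sub_norm_le x₀.1 z.1, norm_sub_rev z.1 x₀.1]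
  have hz₀ : z.1 ≠ 0 := norm_pos_iff.1 (by linarith)
  have hcoef : 1 / ‖z.1‖ ≤ 2 / ‖x₀.1‖ := by
    rw [div_le_div_iff₀ (by linarith) hr]; linarith
  calc sInf (grushinReachTimes y)
      ≤ sInf (grushinReachTimes z) + (1 + 1 / ‖z.1‖) * dist y z :=
        sInf_grushinReachTimes_le_add_dist y hz₀
    _ ≤ sInf (grushinReachTimes z) + (1 + 2 / ‖x₀.1‖) * dist y z := by
        gcongr

end Grushin

theorem stmt_16_general {m : ℕ}
    (U : EuclideanSpace ℝ (Fin m) × ℝ → ℝ)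
    (hU : ∀ x : EuclideanSpace ℝ (Fin m) × ℝ,
      U x = (‖x.1‖ ^ 4 + 4 * x.2 ^ 2) ^ ((1:ℝ)/4)) :
    ∀ x₀ : EuclideanSpace ℝ (Fin m) × ℝ, x₀.1 ≠ 0 →
      (grushinReachTimes x₀).Nonempty ∧
      sInf (grushinReachTimes x₀) ≤ (U x₀) ^ 2 / ‖x₀.1‖ ∧
      ∃ ε > (0:ℝ), ∃ K : NNReal,
        LipschitzOnWith K (fun y : EuclideanSpace ℝ (Fin m) × ℝ =>
          sInf (grushinReachTimes y)) (Metric.ball x₀ ε) := by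
  intro x₀ h₀
  have hU₀ : U x₀ ^ 2 = √(‖x₀.1‖ ^ 4 + 4 * x₀.2 ^ 2) := by
    rw [hU, Real.sqrt_eq_rpow, ← Real.rpow_natCast, ← Real.rpow_mul (by positivity)]
    norm_num
  have hreach := Grushin.reachable_origin h₀
  exact ⟨⟨_, hreach⟩, hU₀ ▸ Grushin.sInf_grushinReachTimes_le hreach, ‖x₀.1‖ / 2,
    half_pos (norm_pos_iff.2 h₀), _, Grushin.lipschitzOnWith_sInf_grushinReachTimes h₀⟩

/-- for the Grushin system, the minimum time function `T` to reach the
origin is finite on `{x_h ≠ 0}`, satisfies `T(x₀) ≤ U(x₀)²/|x_{0,h}|` there, and is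
locally Lipschitz continuous on `{x = (x_h,x_v) : x_h ≠ 0}`. -/
theorem stmt_16 {m : ℕ} (hm : 1 ≤ m)
    (U : EuclideanSpace ℝ (Fin m) × ℝ → ℝ)
    (hU : ∀ x : EuclideanSpace ℝ (Fin m) × ℝ,
      U x = (‖x.1‖ ^ 4 + 4 * x.2 ^ 2) ^ ((1:ℝ)/4)) :
    ∀ x₀ : EuclideanSpace ℝ (Fin m) × ℝ, x₀.1 ≠ 0 →
      (grushinReachTimes x₀).Nonempty ∧
      sInf (grushinReachTimes x₀) ≤ (U x₀) ^ 2 / ‖x₀.1‖ ∧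
      ∃ ε > (0:ℝ), ∃ K : NNReal,
        LipschitzOnWith K (fun y : EuclideanSpace ℝ (Fin m) × ℝ =>
          sInf (grushinReachTimes y)) (Metric.ball x₀ ε) :=
  stmt_16_general U hU
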